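/- Let S, T be n×n complex Hermitian matrices with 0 ≤ S ≤ 1 and 0 ≤ T ≤ 1. Then η(S,T)² ≤ 2·‖S − T‖₁, where ‖·‖₁ denotes the trace norm. -/

import Mathlib

open scoped Classical ComplexOrder Matrix

/-- The positive semidefinite square root of a positive semidefinite matrix
(junk value `0` if the matrix is not positive semidefinite). -/
noncomputable def msqrt {n : Type*} [Fintype n] [DecidableEq n]
    (A : Matrix n n ℂ) : Matrix n n ℂ :=
  if h : A.PosSemidef then
    (h.1.eigenvectorUnitary : Matrix n n ℂ) *
      Matrix.diagonal ((↑) ∘ Real.sqrt ∘ h.1.eigenvalues) *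
      (star (h.1.eigenvectorUnitary : Matrix n n ℂ))
  else 0

/-- The Hilbert-Schmidt (Frobenius) norm of a matrix. -/
noncomputable def frob {n : Type*} [Fintype n]
    (M : Matrix n n ℂ) : ℝ :=
  Real.sqrt (∑ i, ∑ j, ‖M i j‖ ^ 2)

/-- `η(A,B) = ‖√(1−A)·√B − √A·√(1−B)‖₂`. -/
noncomputable def eta {n : Type*} [Fintype n] [DecidableEq n]
    (A B : Matrix n n ℂ) : ℝ :=
  frob (msqrt (1 - A) * msqrt B - msqrt A * msqrt (1 - B))

/-- The trace norm `‖M‖₁ = tr √(M†M)` of a matrix. -/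
noncomputable def traceNorm {n : Type*} [Fintype n] [DecidableEq n]
    (M : Matrix n n ℂ) : ℝ :=
  (msqrt (Mᴴ * M)).trace.re


section Aux
open Matrix
variable {m : Type*} [Fintype m] [DecidableEq m]

/-- The positive semidefinite square root (formerly `Matrix.PosSemidef.sqrt` in Mathlib). -/
noncomputable def Matrix.PosSemidef.sqrt {A : Matrix m m ℂ} (h : A.PosSemidef) : Matrix m m ℂ :=
  (h.1.eigenvectorUnitary : Matrix m m ℂ) *
    Matrix.diagonal ((↑) ∘ Real.sqrt ∘ h.1.eigenvalues) *
    (star (h.1.eigenvectorUnitary : Matrix m m ℂ))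

open scoped MatrixOrder in
lemma Matrix.PosSemidef.sqrt_eq_cfc_sqrt {A : Matrix m m ℂ} (hA : A.PosSemidef) :
    hA.sqrt = CFC.sqrt A := by
  rw [CFC.sqrt_eq_real_sqrt A hA.nonneg, cfcₙ_eq_cfc (hf0 := Real.sqrt_zero), hA.1.cfc_eq, Matrix.IsHermitian.cfc,
    Unitary.conjStarAlgAut_apply]
  rfl

open scoped MatrixOrder in
lemma Matrix.PosSemidef.posSemidef_sqrt {A : Matrix m m ℂ} (hA : A.PosSemidef) :
    hA.sqrt.PosSemidef := by
  rw [hA.sqrt_eq_cfc_sqrt]; exact (CFC.sqrt_nonneg A).posSemidef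

open scoped MatrixOrder in
lemma Matrix.PosSemidef.sqrt_mul_self {A : Matrix m m ℂ} (hA : A.PosSemidef) :
    hA.sqrt * hA.sqrt = A := by
  rw [hA.sqrt_eq_cfc_sqrt]; exact CFC.sqrt_mul_sqrt_self A hA.nonneg

open scoped MatrixOrder in
lemma Matrix.PosSemidef.eq_sqrt_of_sq_eq {R A : Matrix m m ℂ} (hR : R.PosSemidef)
    (hA : A.PosSemidef) (h : R ^ 2 = A) : R = hA.sqrt := by
  rw [hA.sqrt_eq_cfc_sqrt]
  exact (CFC.sqrt_unique (by rw [← sq, h]) hR.nonneg).symm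

lemma rcreal : (RCLike.ofReal : ℝ → ℂ) = Complex.ofReal := rfl

lemma msqrt_eq {A : Matrix m m ℂ} (hA : A.PosSemidef) : msqrt A = hA.sqrt := dif_pos hA

lemma frob_sq_eq (M : Matrix m m ℂ) :
    (∑ i, ∑ j, ‖M i j‖ ^ 2) = ((Mᴴ * M).trace).re := by
  rw [Matrix.trace, Complex.re_sum, Finset.sum_comm]
  refine Finset.sum_congr rfl fun i _ => ?_
  rw [Matrix.diag_apply, Matrix.mul_apply, Complex.re_sum]
  refine Finset.sum_congr rfl fun j _ => ?_
  rw [Matrix.conjTranspose_apply]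
  simp [Complex.star_def, Complex.mul_re, Complex.sq_norm,
    Complex.normSq_apply]

lemma trace_conj_nonneg (M : Matrix m m ℂ) : 0 ≤ ((Mᴴ * M).trace).re := by
  rw [← frob_sq_eq]; positivity

lemma frob_sq (M : Matrix m m ℂ) : frob M ^ 2 = ((Mᴴ * M).trace).re := by
  rw [frob, Real.sq_sqrt (by positivity), frob_sq_eq]

lemma diag_re_nonneg {M : Matrix m m ℂ} (hM : M.PosSemidef) (k : m) : 0 ≤ (M k k).re := by
  have := hM.re_dotProduct_nonneg (Pi.single k 1)
  simpa [Matrix.mulVec_single, dotProduct, Pi.single_apply] using this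
lemma commute_sqrt {A B : Matrix m m ℂ} (hA : A.PosSemidef) (h : A * B = B * A) :
    hA.sqrt * B = B * hA.sqrt := by
  set U : Matrix m m ℂ := hA.1.eigenvectorUnitary.1 with hU
  have hU1 : (star U) * U = 1 := Unitary.coe_star_mul_self _
  have hU2 : U * (star U) = 1 := Unitary.coe_mul_star_self _
  have hL : ∀ X : Matrix m m ℂ, U * ((star U) * X) = X := fun X => by
    rw [← Matrix.mul_assoc, hU2, Matrix.one_mul]
  have hL' : ∀ X : Matrix m m ℂ, (star U) * (U * X) = X := fun X => by
    rw [← Matrix.mul_assoc, hU1, Matrix.one_mul]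
  set d : m → ℝ := hA.1.eigenvalues with hd
  set B' : Matrix m m ℂ := star U * B * U with hB'
  have hdiag : (star U) * A * U = diagonal (RCLike.ofReal ∘ d) :=
    by have := hA.1.conjStarAlgAut_star_eigenvectorUnitary
       rwa [Unitary.conjStarAlgAut_star_apply] at this
  have hcomm : diagonal (RCLike.ofReal ∘ d) * B' = B' * diagonal (RCLike.ofReal ∘ d) := by
    rw [← hdiag, hB']
    simp only [Matrix.mul_assoc, hL, hL']
    simp only [← Matrix.mul_assoc, h]
  have hent : ∀ i j, ((d i : ℂ)) * B' i j = B' i j * (d j : ℂ) := by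
    intro i j
    have := congrArg (fun M => M i j) hcomm
    simpa [Matrix.diagonal_mul, Matrix.mul_diagonal] using this
  have hcomm2 : diagonal ((↑) ∘ Real.sqrt ∘ d) * B' = B' * diagonal ((↑) ∘ Real.sqrt ∘ d) := by
    ext i j
    simp only [Matrix.diagonal_mul, Matrix.mul_diagonal, Function.comp_apply]
    rcases eq_or_ne (B' i j) 0 with h0 | h0
    · simp [h0]
    · have h1 : B' i j * (d i:ℂ) = B' i j * (d j:ℂ) := by
        rw [mul_comm (B' i j) ((d i : ℂ))]; exact hent i j
      have h2 : (d i : ℂ) = (d j : ℂ) := mul_left_cancel₀ h0 h1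
      have hdd : d i = d j := by exact_mod_cast h2
      rw [hdd, mul_comm]
  have hBU : U * B' * star U = B := by
    rw [hB']
    simp only [Matrix.mul_assoc, hL, hL']
    rw [hU2, Matrix.mul_one]
  have hsqrt : hA.sqrt = U * diagonal ((↑) ∘ Real.sqrt ∘ d) * star U := rfl
  rw [hsqrt, ← hBU]
  calc U * diagonal ((↑) ∘ Real.sqrt ∘ d) * star U * (U * B' * star U)
      = U * (diagonal ((↑) ∘ Real.sqrt ∘ d) * B') * star U := by
        simp only [Matrix.mul_assoc, hL, hL']
    _ = U * (B' * diagonal ((↑) ∘ Real.sqrt ∘ d)) * star U := by rw [hcomm2]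
    _ = U * B' * star U * (U * diagonal ((↑) ∘ Real.sqrt ∘ d) * star U) := by
        simp only [Matrix.mul_assoc, hL, hL']
lemma traceNorm_hermitian {D : Matrix m m ℂ} (hD : D.IsHermitian) :
    traceNorm D = ∑ i, |hD.eigenvalues i| := by
  set U : Matrix m m ℂ := hD.eigenvectorUnitary.1 with hU
  have hU1 : (star U) * U = 1 := Unitary.coe_star_mul_self _
  have hU2 : U * (star U) = 1 := Unitary.coe_mul_star_self _
  set d : m → ℝ := hD.eigenvalues with hd
  set R : Matrix m m ℂ := U * diagonal ((↑) ∘ (fun t => |t|) ∘ d) * star U with hR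
  have hRpsd : R.PosSemidef := by
    have hdiag : (diagonal ((↑) ∘ (fun t => |t|) ∘ d) : Matrix m m ℂ).PosSemidef :=
      PosSemidef.diagonal (fun i => by
        simp only [Function.comp_apply]
        simpa using Complex.zero_le_real.mpr (abs_nonneg (d i)))
    have := hdiag.mul_mul_conjTranspose_same U
    rwa [← Matrix.star_eq_conjTranspose] at this
  have hDD : (Dᴴ * D).PosSemidef := posSemidef_conjTranspose_mul_self D
  have habs : (diagonal ((↑) ∘ (fun t => |t|) ∘ d) : Matrix m m ℂ) *
      diagonal ((↑) ∘ (fun t => |t|) ∘ d)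
      = diagonal (RCLike.ofReal ∘ d) * diagonal (RCLike.ofReal ∘ d) := by
    rw [Matrix.diagonal_mul_diagonal, Matrix.diagonal_mul_diagonal]
    refine congrArg Matrix.diagonal (funext fun i => ?_)
    simp only [Function.comp_apply]
    norm_cast
    exact congrArg _ (abs_mul_abs_self (d i))
  have hsq : R ^ 2 = Dᴴ * D := by
    rw [hD.eq, pow_two, hR]
    conv_rhs => rw [hD.spectral_theorem, Unitary.conjStarAlgAut_apply]
    rw [← hU]
    calc U * diagonal ((↑) ∘ (fun t => |t|) ∘ d) * star U *
          (U * diagonal ((↑) ∘ (fun t => |t|) ∘ d) * star U)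
        = U * (diagonal ((↑) ∘ (fun t => |t|) ∘ d) * ((star U * U) *
            diagonal ((↑) ∘ (fun t => |t|) ∘ d))) * star U := by
          simp only [Matrix.mul_assoc]
      _ = U * (diagonal ((↑) ∘ (fun t => |t|) ∘ d) * diagonal ((↑) ∘ (fun t => |t|) ∘ d)) *
            star U := by rw [hU1, Matrix.one_mul]
      _ = U * (diagonal (RCLike.ofReal ∘ d) * ((star U * U) * diagonal (RCLike.ofReal ∘ d))) *
            star U := by rw [hU1, Matrix.one_mul, habs]
      _ = U * diagonal (RCLike.ofReal ∘ d) * star U *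
            (U * diagonal (RCLike.ofReal ∘ d) * star U) := by simp only [Matrix.mul_assoc]
  have hReq : R = hDD.sqrt := hRpsd.eq_sqrt_of_sq_eq hDD hsq
  rw [traceNorm, msqrt_eq hDD, ← hReq, hR]
  rw [Matrix.trace_mul_comm, ← Matrix.mul_assoc, hU1, Matrix.one_mul, Matrix.trace_diagonal]
  rw [Complex.re_sum]
  refine Finset.sum_congr rfl fun i _ => ?_
  simp
lemma powers_stormer {A B : Matrix m m ℂ} (hA : A.PosSemidef) (hB : B.PosSemidef) :
    (((hA.sqrt - hB.sqrt)ᴴ * (hA.sqrt - hB.sqrt)).trace).re ≤ traceNorm (A - B) := by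
  have hP := hA.posSemidef_sqrt
  have hQ := hB.posSemidef_sqrt
  set P := hA.sqrt with hPdef
  set Q := hB.sqrt with hQdef
  have hX : (P - Q).IsHermitian := hP.1.sub hQ.1
  have hD : (A - B).IsHermitian := hA.1.sub hB.1
  set V : Matrix m m ℂ := hX.eigenvectorUnitary.1 with hV
  have hV1 : (star V) * V = 1 := Unitary.coe_star_mul_self _
  have hV2 : V * (star V) = 1 := Unitary.coe_mul_star_self _
  have hL : ∀ Z : Matrix m m ℂ, V * ((star V) * Z) = Z := fun Z => by
    rw [← Matrix.mul_assoc, hV2, Matrix.one_mul]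
  have hL' : ∀ Z : Matrix m m ℂ, (star V) * (V * Z) = Z := fun Z => by
    rw [← Matrix.mul_assoc, hV1, Matrix.one_mul]
  set x : m → ℝ := hX.eigenvalues with hx
  have hXdiag : star V * (P - Q) * V = diagonal (RCLike.ofReal ∘ x) :=
    by have := hX.conjStarAlgAut_star_eigenvectorUnitary
       rwa [Unitary.conjStarAlgAut_star_apply] at this
  -- LHS equals sum of squares of eigenvalues of X
  have hXX : (((P - Q)ᴴ * (P - Q)).trace).re = ∑ i, x i ^ 2 := by
    rw [hX.eq]
    conv_lhs => rw [hX.spectral_theorem, Unitary.conjStarAlgAut_apply]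
    rw [← hV, ← hx]
    have : V * diagonal (RCLike.ofReal ∘ x) * star V *
        (V * diagonal (RCLike.ofReal ∘ x) * star V)
        = V * (diagonal (RCLike.ofReal ∘ x) * diagonal (RCLike.ofReal ∘ x)) * star V := by
      simp only [Matrix.mul_assoc, hL, hL']
    rw [this, Matrix.trace_mul_comm, ← Matrix.mul_assoc, hV1, Matrix.one_mul,
      Matrix.diagonal_mul_diagonal, Matrix.trace_diagonal, Complex.re_sum]
    refine Finset.sum_congr rfl fun i _ => ?_
    simp [Function.comp_apply, ← Complex.ofReal_mul, sq]
  -- key relation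
  set Y := P + Q with hY
  set D' : Matrix m m ℂ := star V * (A - B) * V with hD'
  set Y' : Matrix m m ℂ := star V * Y * V with hY'
  have hrel : ∀ k, D' k k = (x k : ℂ) * Y' k k := by
    have hYX : (P - Q) * Y + Y * (P - Q) = (A - B) + (A - B) := by
      have h1 : P * P = A := hA.sqrt_mul_self
      have h2 : Q * Q = B := hB.sqrt_mul_self
      rw [hY, ← h1, ← h2]; noncomm_ring
    have hE : diagonal (RCLike.ofReal ∘ x) * Y' + Y' * diagonal (RCLike.ofReal ∘ x)
        = D' + D' := by
      calc diagonal (RCLike.ofReal ∘ x) * Y' + Y' * diagonal (RCLike.ofReal ∘ x)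
          = (star V * (P - Q) * V) * (star V * Y * V)
            + (star V * Y * V) * (star V * (P - Q) * V) := by rw [hXdiag]
        _ = star V * ((P - Q) * Y + Y * (P - Q)) * V := by
            simp only [Matrix.mul_add, Matrix.add_mul, Matrix.mul_assoc, hL, hL']
        _ = star V * ((A - B) + (A - B)) * V := by rw [hYX]
        _ = D' + D' := by
            rw [hD']; simp only [Matrix.mul_add, Matrix.add_mul]
    intro k
    have h1 := congrArg (fun M => M k k) hE
    simp only [Matrix.add_apply, Matrix.diagonal_mul, Matrix.mul_diagonal,
      Function.comp_apply] at h1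
    have h1' : (x k : ℂ) * Y' k k + Y' k k * (x k : ℂ) = D' k k + D' k k := h1
    linear_combination -h1' / 2
  -- diagonal entries of Y' dominate |x k|
  have hYpX : (Y' + diagonal (RCLike.ofReal ∘ x)).PosSemidef := by
    have h2P := (hP.add hP).conjTranspose_mul_mul_same V
    rw [← Matrix.star_eq_conjTranspose] at h2P
    have heq : star V * (P + P) * V = Y' + diagonal (RCLike.ofReal ∘ x) := by
      rw [← hXdiag, hY', hY]
      simp only [Matrix.mul_add, Matrix.add_mul, Matrix.mul_sub, Matrix.sub_mul]
      abel
    rwa [heq] at h2P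
  have hYmX : (Y' - diagonal (RCLike.ofReal ∘ x)).PosSemidef := by
    have h2Q := (hQ.add hQ).conjTranspose_mul_mul_same V
    rw [← Matrix.star_eq_conjTranspose] at h2Q
    have heq : star V * (Q + Q) * V = Y' - diagonal (RCLike.ofReal ∘ x) := by
      rw [← hXdiag, hY', hY]
      simp only [Matrix.mul_add, Matrix.add_mul, Matrix.mul_sub, Matrix.sub_mul]
      abel
    rwa [heq] at h2Q
  have hyx : ∀ k, |x k| ≤ (Y' k k).re := by
    intro k
    have h1 := diag_re_nonneg hYpX k
    have h2 := diag_re_nonneg hYmX k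
    simp only [Matrix.add_apply, Matrix.sub_apply, Matrix.diagonal_apply_eq,
      Function.comp_apply, Complex.add_re, Complex.sub_re, rcreal,
      Complex.ofReal_re] at h1 h2
    exact abs_le.mpr ⟨by linarith, by linarith⟩
  have hkk : ∀ k, x k ^ 2 ≤ |(D' k k).re| := by
    intro k
    rw [hrel k]
    have hre : ((x k : ℂ) * Y' k k).re = x k * (Y' k k).re := by
      simp [Complex.mul_re]
    rw [hre, abs_mul]
    have h1 := hyx k
    have h0 : 0 ≤ (Y' k k).re := le_trans (abs_nonneg _) h1
    rw [abs_of_nonneg h0]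
    nlinarith [abs_nonneg (x k), sq_abs (x k)]
  -- pinching
  set W : Matrix m m ℂ := hD.eigenvectorUnitary.1 with hW
  have hW1 : (star W) * W = 1 := Unitary.coe_star_mul_self _
  set dd : m → ℝ := hD.eigenvalues with hdd
  set Z : Matrix m m ℂ := star V * W with hZ
  have hZstar : star Z = star W * V := by rw [hZ, Matrix.star_mul, star_star]
  have hZcol : ∀ j, (∑ k, Complex.normSq (Z k j)) = 1 := by
    intro j
    have hZZ : star Z * Z = 1 := by
      rw [hZstar, hZ]
      calc star W * V * (star V * W) = star W * (V * (star V * W)) := by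
            rw [Matrix.mul_assoc]
        _ = star W * W := by rw [hL]
        _ = 1 := hW1
    have h1 := congrArg (fun M => M j j) hZZ
    simp only [Matrix.mul_apply, Matrix.one_apply_eq] at h1
    have h2 : ∀ k, (star Z) j k * Z k j = ((Complex.normSq (Z k j) : ℝ) : ℂ) := by
      intro k
      rw [Matrix.star_apply, Complex.star_def, mul_comm, Complex.mul_conj]
    rw [Finset.sum_congr rfl (fun k _ => h2 k)] at h1
    have h3 : ((∑ k, Complex.normSq (Z k j) : ℝ) : ℂ) = 1 := by
      push_cast
      exact h1
    exact_mod_cast h3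
  have hDpin : ∀ k, (D' k k).re = ∑ j, dd j * Complex.normSq (Z k j) := by
    intro k
    have hDspec : D' = Z * diagonal (RCLike.ofReal ∘ dd) * star Z := by
      rw [hD', hZstar, hZ]
      conv_lhs => rw [hD.spectral_theorem, Unitary.conjStarAlgAut_apply]
      rw [← hW, ← hdd]
      simp only [Matrix.mul_assoc]
    rw [hDspec, Matrix.mul_apply]
    have h2 : ∀ j, ((Z * diagonal (RCLike.ofReal ∘ dd) : Matrix m m ℂ)) k j * (star Z) j k
        = ((dd j * Complex.normSq (Z k j) : ℝ) : ℂ) := by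
      intro j
      rw [Matrix.mul_diagonal, Matrix.star_apply, Complex.star_def]
      simp only [Function.comp_apply, rcreal]
      push_cast [Complex.normSq_eq_conj_mul_self]
      ring
    rw [Finset.sum_congr rfl (fun j _ => h2 j)]
    rw [show (∑ j, ((dd j * Complex.normSq (Z k j) : ℝ) : ℂ))
      = ((∑ j, dd j * Complex.normSq (Z k j) : ℝ) : ℂ) from by push_cast; rfl]
    exact Complex.ofReal_re _
  -- put it together
  rw [hXX, traceNorm_hermitian hD, ← hdd]
  calc ∑ i, x i ^ 2 ≤ ∑ k, |(D' k k).re| := Finset.sum_le_sum fun k _ => hkk k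
    _ ≤ ∑ k, ∑ j, |dd j| * Complex.normSq (Z k j) := by
        refine Finset.sum_le_sum fun k _ => ?_
        rw [hDpin k]
        refine le_trans (Finset.abs_sum_le_sum_abs _ _) (Finset.sum_le_sum fun j _ => ?_)
        rw [abs_mul, abs_of_nonneg (Complex.normSq_nonneg _)]
    _ = ∑ j, |dd j| * (∑ k, Complex.normSq (Z k j)) := by
        rw [Finset.sum_comm]
        simp [Finset.mul_sum]
    _ = ∑ j, |dd j| := by
        refine Finset.sum_congr rfl fun j _ => ?_
        rw [hZcol j, mul_one]
lemma cycword (a b c d : Matrix m m ℂ) :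
    (a * b * (c * d)).trace = (b * (c * (d * a))).trace := by
  rw [Matrix.mul_assoc, Matrix.trace_mul_comm]
  congr 1
  noncomm_ring

lemma key_identity {p q r s : Matrix m m ℂ}
    (hp : pᴴ = p) (hq : qᴴ = q) (hr : rᴴ = r) (hs : sᴴ = s)
    (hpq : p * q = q * p) (h1 : p * p + q * q = 1) (h2 : r * r + s * s = 1) :
    ((q * r - p * s)ᴴ * (q * r - p * s)).trace
      + ((p * r + q * s - 1)ᴴ * (p * r + q * s - 1)).trace
    = ((p - r)ᴴ * (p - r)).trace + ((q - s)ᴴ * (q - s)).trace := by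
  have E1 : s * p * (q * r) = s * q * (p * r) := by
    rw [Matrix.mul_assoc s p (q * r), ← Matrix.mul_assoc p q r, hpq,
      Matrix.mul_assoc q p r, ← Matrix.mul_assoc s q (p * r)]
  have E2 : r * q * (p * s) = r * p * (q * s) := by
    rw [Matrix.mul_assoc r q (p * s), ← Matrix.mul_assoc q p s, ← hpq,
      Matrix.mul_assoc p q s, ← Matrix.mul_assoc r p (q * s)]
  have C1 : (q * (q * (r * r))).trace + (q * (q * (s * s))).trace = (q * q).trace := by
    rw [← Matrix.trace_add]
    congr 1
    rw [← Matrix.mul_add, ← Matrix.mul_add, h2, Matrix.mul_one]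
  have C2 : (p * (p * (r * r))).trace + (p * (p * (s * s))).trace = (p * p).trace := by
    rw [← Matrix.trace_add]
    congr 1
    rw [← Matrix.mul_add, ← Matrix.mul_add, h2, Matrix.mul_one]
  have D2 : (r * r).trace + (s * s).trace = (1 : Matrix m m ℂ).trace := by
    rw [← Matrix.trace_add, h2]
  simp only [Matrix.conjTranspose_sub, Matrix.conjTranspose_add, Matrix.conjTranspose_mul,
    Matrix.conjTranspose_one, hp, hq, hr, hs]
  simp only [Matrix.sub_mul, Matrix.mul_sub, Matrix.add_mul, Matrix.mul_add,
    Matrix.trace_sub, Matrix.trace_add, Matrix.mul_one, Matrix.one_mul]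
  rw [E1, E2, cycword r q q r, cycword s p p s, cycword r p p r, cycword s q q s]
  linear_combination C1 + C2 - D2

end Aux

theorem eta_sq_le_two_traceNorm {n : ℕ}
    (S T : Matrix (Fin n) (Fin n) ℂ)
    (hS : S.PosSemidef) (hS1 : (1 - S).PosSemidef)
    (hT : T.PosSemidef) (hT1 : (1 - T).PosSemidef) :
    eta S T ^ 2 ≤ 2 * traceNorm (S - T) := by
  have hp1 : (hS.sqrt)ᴴ = hS.sqrt := hS.posSemidef_sqrt.1
  have hq1 : (hS1.sqrt)ᴴ = hS1.sqrt := hS1.posSemidef_sqrt.1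
  have hr1 : (hT.sqrt)ᴴ = hT.sqrt := hT.posSemidef_sqrt.1
  have hs1 : (hT1.sqrt)ᴴ = hT1.sqrt := hT1.posSemidef_sqrt.1
  have hpq : hS.sqrt * hS1.sqrt = hS1.sqrt * hS.sqrt := by
    have c1 : (1 - S) * S = S * (1 - S) := by noncomm_ring
    have c2 := commute_sqrt hS1 c1
    exact commute_sqrt hS c2.symm
  have h1 : hS.sqrt * hS.sqrt + hS1.sqrt * hS1.sqrt = 1 := by
    rw [hS.sqrt_mul_self, hS1.sqrt_mul_self]; abel
  have h2 : hT.sqrt * hT.sqrt + hT1.sqrt * hT1.sqrt = 1 := by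
    rw [hT.sqrt_mul_self, hT1.sqrt_mul_self]; abel
  have hkey := key_identity hp1 hq1 hr1 hs1 hpq h1 h2
  have hkeyre := congrArg Complex.re hkey
  rw [Complex.add_re, Complex.add_re] at hkeyre
  have hC := trace_conj_nonneg (hS.sqrt * hT.sqrt + hS1.sqrt * hT1.sqrt - 1)
  have P1 := powers_stormer hS hT
  have P2 := powers_stormer hS1 hT1
  have hTS : (1 : Matrix (Fin n) (Fin n) ℂ) - S - (1 - T) = T - S := by abel
  have hnorm : traceNorm (T - S) = traceNorm (S - T) := by
    rw [traceNorm, traceNorm, show T - S = -(S - T) from (neg_sub S T).symm,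
      Matrix.conjTranspose_neg, Matrix.neg_mul, Matrix.mul_neg, neg_neg]
  rw [hTS, hnorm] at P2
  have heta : eta S T ^ 2
      = (((hS1.sqrt * hT.sqrt - hS.sqrt * hT1.sqrt)ᴴ
          * (hS1.sqrt * hT.sqrt - hS.sqrt * hT1.sqrt)).trace).re := by
    rw [eta, msqrt_eq hS1, msqrt_eq hT, msqrt_eq hS, msqrt_eq hT1, frob_sq]
  rw [heta]
  linarith
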